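/- Suppose that R is a prime rich ring, S ∈ Den(R, 𝔞) is a left and right denominator set that respects the ideal structure of primes, and S⁻¹𝔭 is a prime ideal of S⁻¹R for all 𝔭 ∈ min(R, S). Then: (1) 1 ≤ |min(R,S)| ≤ |min(R)| < ∞ and min(S⁻¹R) equals the set of minimal elements (with respect to inclusion) of { S⁻¹𝔭 | 𝔭 ∈ min(R,S) }; in particular |min(S⁻¹R)| ≤ |min(R,S)| < ∞. (2) min(S⁻¹R) = { S⁻¹𝔭 | 𝔭 ∈ min(R,S) } if and only if the ideals { S⁻¹𝔭 | 𝔭 ∈ min(R,S) } are pairwise incomparable. (3) If in addition, for each 𝔭 ∈ min(R,S), the ideal σ_S⁻¹(S⁻¹𝔭) of R is a finitely generated right R-module (e.g. R is right Noetherian), then min(S⁻¹R) = { S⁻¹𝔭 | 𝔭 ∈ min(R,S) }. -/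

import Mathlib

/- Common framework: two-sided ideals, prime ideals, denominator sets and
   left localizations of (possibly noncommutative) rings, described
   axiomatically via their characteristic properties. -/

namespace BavulaMinPrimes

/-- A subset of a ring is a two-sided ideal. -/
def IsIdealSet {R : Type*} [Ring R] (I : Set R) : Prop :=
  (0 : R) ∈ I ∧ (∀ a ∈ I, ∀ b ∈ I, a + b ∈ I) ∧ (∀ a ∈ I, -a ∈ I) ∧
    ∀ a ∈ I, ∀ r : R, r * a ∈ I ∧ a * r ∈ I

/-- A (two-sided) prime ideal: a proper ideal `P` such that `A * B ⊆ P`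
implies `A ⊆ P` or `B ⊆ P` for all ideals `A`, `B`. -/
def IsPrimeIdealSet {R : Type*} [Ring R] (P : Set R) : Prop :=
  IsIdealSet P ∧ P ≠ Set.univ ∧
    ∀ A B : Set R, IsIdealSet A → IsIdealSet B →
      (∀ a ∈ A, ∀ b ∈ B, a * b ∈ P) → A ⊆ P ∨ B ⊆ P

/-- A completely prime ideal: the factor ring is a domain. -/
def IsCompletelyPrimeIdealSet {R : Type*} [Ring R] (P : Set R) : Prop :=
  IsIdealSet P ∧ P ≠ Set.univ ∧ ∀ a b : R, a * b ∈ P → a ∈ P ∨ b ∈ P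

/-- A minimal prime ideal of a ring. -/
def IsMinimalPrimeIdealSet {R : Type*} [Ring R] (P : Set R) : Prop :=
  IsPrimeIdealSet P ∧ ∀ P' : Set R, IsPrimeIdealSet P' → P' ⊆ P → P' = P

/-- A prime minimal over an ideal `A`. -/
def IsMinimalPrimeOver {R : Type*} [Ring R] (A P : Set R) : Prop :=
  IsPrimeIdealSet P ∧ A ⊆ P ∧
    ∀ P' : Set R, IsPrimeIdealSet P' → A ⊆ P' → P' ⊆ P → P' = P

/-- The set `min(R)` of minimal primes of `R`. -/
def minPrimes (R : Type*) [Ring R] : Set (Set R) := { P | IsMinimalPrimeIdealSet P }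

/-- The prime radical: intersection of all prime ideals. -/
def primeRadicalSet (R : Type*) [Ring R] : Set R :=
  { r : R | ∀ P : Set R, IsPrimeIdealSet P → r ∈ P }

/-- A ring is semiprime if its prime radical is zero. -/
def IsSemiprimeRing (R : Type*) [Ring R] : Prop := primeRadicalSet R = {0}

/-- A ring is prime if its zero ideal is a prime ideal. -/
def IsPrimeRing (R : Type*) [Ring R] : Prop := IsPrimeIdealSet ({0} : Set R)

/-- A multiplicative subset: `1 ∈ S`, `0 ∉ S`, closed under multiplication. -/
def IsMulSet {R : Type*} [Ring R] (S : Set R) : Prop :=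
  (1 : R) ∈ S ∧ (0 : R) ∉ S ∧ ∀ s ∈ S, ∀ t ∈ S, s * t ∈ S

/-- The left Ore condition: `S r ∩ R s ≠ ∅`. -/
def LeftOre {R : Type*} [Ring R] (S : Set R) : Prop :=
  ∀ r : R, ∀ s ∈ S, ∃ s' ∈ S, ∃ r' : R, s' * r = r' * s

/-- The right Ore condition: `r S ∩ s R ≠ ∅`. -/
def RightOre {R : Type*} [Ring R] (S : Set R) : Prop :=
  ∀ r : R, ∀ s ∈ S, ∃ s' ∈ S, ∃ r' : R, r * s' = s * r'

/-- A left denominator set: a left Ore multiplicative set such that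
`r s = 0` (with `s ∈ S`) implies `t r = 0` for some `t ∈ S`. -/
def IsLeftDenominatorSet {R : Type*} [Ring R] (S : Set R) : Prop :=
  IsMulSet S ∧ LeftOre S ∧ ∀ r : R, ∀ s ∈ S, r * s = 0 → ∃ t ∈ S, t * r = 0

/-- A right denominator set. -/
def IsRightDenominatorSet {R : Type*} [Ring R] (S : Set R) : Prop :=
  IsMulSet S ∧ RightOre S ∧ ∀ r : R, ∀ s ∈ S, s * r = 0 → ∃ t ∈ S, r * t = 0

/-- `ass_l(S) = { r | s r = 0 for some s ∈ S }`. -/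
def lAss {R : Type*} [Ring R] (S : Set R) : Set R := { r : R | ∃ s ∈ S, s * r = 0 }

/-- `f : R →+* Q` realizes `Q` as the left localization `S⁻¹R`:
elements of `S` become units, every element of `Q` is a left fraction
`(f s)⁻¹ (f r)`, and the kernel of `f` is `ass_l(S)`.  These properties
characterize `S⁻¹R` up to a unique `R`-isomorphism. -/
structure IsLeftLocalization {R Q : Type*} [Ring R] [Ring Q]
    (S : Set R) (f : R →+* Q) : Prop where
  isUnit : ∀ s ∈ S, IsUnit (f s)
  surj : ∀ q : Q, ∃ s ∈ S, ∃ r : R, f s * q = f r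
  ker : ∀ r : R, f r = 0 ↔ r ∈ lAss S

/-- `S⁻¹I = { s⁻¹ a | s ∈ S, a ∈ I }` as a subset of the localization `Q`:
`q ∈ S⁻¹I` iff `f s * q = f a` for some `s ∈ S`, `a ∈ I`. -/
def locSet {R Q : Type*} [Ring R] [Ring Q] (f : R →+* Q) (S : Set R)
    (I : Set R) : Set Q :=
  { q : Q | ∃ s ∈ S, ∃ a ∈ I, f s * q = f a }

/-- A normal element: `R n = n R`. -/
def IsNormalElement {R : Type*} [Ring R] (n : R) : Prop :=
  (∀ r : R, ∃ r' : R, r * n = n * r') ∧ ∀ r : R, ∃ r' : R, n * r = r' * n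

/-- A prime rich ring: every ideal contains a finite product of prime ideals
containing it (the empty product being the whole ring). -/
def IsPrimeRich (R : Type*) [Ring R] : Prop :=
  ∀ A : Set R, IsIdealSet A →
    ∃ (n : ℕ) (P : Fin n → Set R),
      (∀ i, IsPrimeIdealSet (P i) ∧ A ⊆ P i) ∧
      ∀ x : Fin n → R, (∀ i, x i ∈ P i) → (List.ofFn x).prod ∈ A

/-- An ideal which is finitely generated as a right `R`-module. -/
def IsFGRightIdeal {R : Type*} [Ring R] (I : Set R) : Prop :=
  ∃ (m : ℕ) (g : Fin m → R), (∀ i, g i ∈ I) ∧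
    ∀ x ∈ I, ∃ c : Fin m → R, x = ∑ i, g i * c i

/-!
Prime richness of the zero ideal gives finitely many primes `P₁, …, Pₙ` with `P₁ ⋯ Pₙ = 0`.
Every prime contains some `Pᵢ`, so the minimal primes of `R` are among the `Pᵢ` and every prime
lies above a minimal one; and some `Pᵢ` misses `S`, since otherwise `0 = s₁ ⋯ sₙ ∈ S`.

Because `S⁻¹Pᵢ` is an ideal, `σ(a) σ(s)⁻¹` with `a ∈ Pᵢ` is again a left fraction with numerator
in `Pᵢ`; hence `S⁻¹P₁ ⋯ S⁻¹Pₙ ⊆ S⁻¹(P₁ ⋯ Pₙ) = 0` and every prime of `S⁻¹R` contains some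
`S⁻¹Pᵢ`, so also `S⁻¹𝔭` for a minimal prime `𝔭 ⊆ Pᵢ`, which lies in `min(R,S)`. As these `S⁻¹𝔭`
are prime, the minimal primes of `S⁻¹R` are the minimal elements among them.

If `𝔭' = σ⁻¹(S⁻¹𝔭)` is finitely generated as a right ideal, a common left multiple `t ∈ S` of
denominators clearing its generators satisfies `t 𝔭' ⊆ 𝔭`, so `t R 𝔭' ⊆ 𝔭` and, `𝔭` being prime
and disjoint from `S`, `𝔭' = 𝔭`. Then `𝔭 ↦ S⁻¹𝔭` reflects inclusion on `min(R,S)`, and the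
`S⁻¹𝔭` are pairwise incomparable.
-/

section Order

variable {α : Type*} [PartialOrder α] {P : α → Prop} {L : Set α}

theorem minimal_iff_minimal_mem_of_forall_exists_le (hL : ∀ y ∈ L, P y)
    (hcov : ∀ x, P x → ∃ y ∈ L, y ≤ x) {x : α} : Minimal P x ↔ Minimal (· ∈ L) x := by
  constructor
  · intro hx
    obtain ⟨y, hyL, hyx⟩ := hcov x hx.prop
    obtain rfl := hx.eq_of_le (hL y hyL) hyx
    exact ⟨hyL, fun z hz hzy => hx.le_of_le (hL z hz) hzy⟩
  · intro hx
    refine ⟨hL x hx.prop, fun z hz hzx => ?_⟩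
    obtain ⟨y, hyL, hyz⟩ := hcov z hz
    exact (hx.le_of_le hyL (hyz.trans hzx)).trans hyz

theorem exists_minimal_le_of_forall_exists_le (hfin : L.Finite) (hL : ∀ y ∈ L, P y)
    (hcov : ∀ x, P x → ∃ y ∈ L, y ≤ x) {x : α} (hx : P x) : ∃ y, Minimal P y ∧ y ≤ x := by
  obtain ⟨y, hyL, hyx⟩ := hcov x hx
  obtain ⟨z, hzy, hz⟩ := hfin.exists_le_minimal hyL
  exact ⟨z, (minimal_iff_minimal_mem_of_forall_exists_le hL hcov).2 hz, hzy.trans hyx⟩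

theorem sep_minimal_eq_self_iff :
    {x ∈ L | ∀ y ∈ L, y ≤ x → y = x} = L ↔ ∀ x ∈ L, ∀ y ∈ L, x ≤ y → x = y := by
  constructor
  · intro h x hx y hy hxy
    rw [← h] at hy
    exact hy.2 x hx hxy
  · intro h
    ext x
    exact ⟨fun hx => hx.1, fun hx => ⟨hx, fun y hy hyx => h y hy x hx hyx⟩⟩

end Order

section Ideal

variable {T : Type*} [Ring T] {I P : Set T}

namespace IsIdealSet

theorem zero_mem (hI : IsIdealSet I) : (0 : T) ∈ I := hI.1

theorem add_mem (hI : IsIdealSet I) {a b : T} (ha : a ∈ I) (hb : b ∈ I) : a + b ∈ I :=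
  hI.2.1 a ha b hb

theorem neg_mem (hI : IsIdealSet I) {a : T} (ha : a ∈ I) : -a ∈ I := hI.2.2.1 a ha

theorem mul_mem_left (hI : IsIdealSet I) (r : T) {a : T} (ha : a ∈ I) : r * a ∈ I :=
  (hI.2.2.2 a ha r).1

theorem mul_mem_right (hI : IsIdealSet I) {a : T} (ha : a ∈ I) (r : T) : a * r ∈ I :=
  (hI.2.2.2 a ha r).2

theorem eq_univ_of_one_mem (hI : IsIdealSet I) (h : (1 : T) ∈ I) : I = Set.univ :=
  Set.eq_univ_of_forall fun r => by simpa using hI.mul_mem_left r h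

end IsIdealSet

namespace IsPrimeIdealSet

theorem one_notMem (hP : IsPrimeIdealSet P) : (1 : T) ∉ P :=
  fun h => hP.2.1 (hP.1.eq_univ_of_one_mem h)

theorem mem_or_mem_of_forall_mul_mul_mem (hP : IsPrimeIdealSet P) {x y : T}
    (h : ∀ q, x * q * y ∈ P) : x ∈ P ∨ y ∈ P := by
  -- `B` is the largest ideal with `x R B ⊆ P`, and `A` the largest with `A B ⊆ P`.
  set B : Set T := {b | ∀ q, x * q * b ∈ P}
  set A : Set T := {a | ∀ b ∈ B, a * b ∈ P}
  have hB : IsIdealSet B := by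
    refine ⟨fun q => by simpa using hP.1.zero_mem, fun a ha b hb q => ?_, fun a ha q => ?_,
      fun a ha r => ⟨fun q => ?_, fun q => ?_⟩⟩
    · rw [mul_add]; exact hP.1.add_mem (ha q) (hb q)
    · rw [mul_neg]; exact hP.1.neg_mem (ha q)
    · simpa only [mul_assoc] using ha (q * r)
    · simpa only [mul_assoc] using hP.1.mul_mem_right (ha q) r
  have hA : IsIdealSet A := by
    refine ⟨fun b _ => by simpa using hP.1.zero_mem, fun a ha a' ha' b hb => ?_,
      fun a ha b hb => ?_, fun a ha r => ⟨fun b hb => ?_, fun b hb => ?_⟩⟩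
    · rw [add_mul]; exact hP.1.add_mem (ha b hb) (ha' b hb)
    · rw [neg_mul]; exact hP.1.neg_mem (ha b hb)
    · rw [mul_assoc]; exact hP.1.mul_mem_left r (ha b hb)
    · rw [mul_assoc]; exact ha _ (hB.mul_mem_left r hb)
  have hxA : x ∈ A := fun b hb => by simpa using hb 1
  rcases hP.2.2 A B hA hB fun a ha b hb => ha b hb with hAP | hBP
  · exact Or.inl (hAP hxA)
  · exact Or.inr (hBP h)

theorem exists_subset_of_forall_prod_mem (hP : IsPrimeIdealSet P) :
    ∀ {n : ℕ} {I : Fin n → Set T}, (∀ i, IsIdealSet (I i)) →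
      (∀ x : Fin n → T, (∀ i, x i ∈ I i) → (List.ofFn x).prod ∈ P) → ∃ i, I i ⊆ P
  | 0, _, _, hprod => absurd (by simpa using hprod Fin.elim0 fun i => i.elim0) hP.one_notMem
  | n + 1, I, hI, hprod => by
    by_cases h0 : I 0 ⊆ P
    · exact ⟨0, h0⟩
    obtain ⟨a, haI, haP⟩ := Set.not_subset.mp h0
    -- `a q` can be absorbed into the first factor, so the tail products lie in `P`
    have htail : ∀ x : Fin n → T, (∀ i, x i ∈ I i.succ) → (List.ofFn x).prod ∈ P := by
      intro x hx
      refine (hP.mem_or_mem_of_forall_mul_mul_mem fun q => ?_).resolve_left haP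
      have := hprod (Fin.cons (a * q) x) (Fin.cases ((hI 0).mul_mem_right haI q) hx)
      simpa [List.ofFn_succ, mul_assoc] using this
    obtain ⟨i, hi⟩ := exists_subset_of_forall_prod_mem hP (fun i => hI i.succ) htail
    exact ⟨i.succ, hi⟩

end IsPrimeIdealSet

theorem isMinimalPrimeIdealSet_iff_minimal :
    IsMinimalPrimeIdealSet P ↔ Minimal IsPrimeIdealSet P :=
  ⟨fun h => ⟨h.1, fun _ hQ hle => (h.2 _ hQ hle).ge⟩,
    fun h => ⟨h.1, fun _ hQ hle => h.eq_of_le hQ hle⟩⟩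

theorem minPrimes_eq_of_forall_exists_subset {L : Set (Set T)}
    (hL : ∀ P ∈ L, IsPrimeIdealSet P) (hcov : ∀ P, IsPrimeIdealSet P → ∃ P₀ ∈ L, P₀ ⊆ P) :
    minPrimes T = {P ∈ L | ∀ P' ∈ L, P' ⊆ P → P' = P} := by
  ext P
  simp only [minPrimes, Set.mem_ofPred_eq, isMinimalPrimeIdealSet_iff_minimal,
    minimal_iff_minimal_mem_of_forall_exists_le hL hcov, minimal_mem_iff]
  exact and_congr_right fun _ => forall₂_congr fun _ _ => imp_congr_right fun _ => eq_comm

end Ideal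

section PrimeRich

variable {T : Type*} [Ring T]

theorem IsMulSet.prod_ofFn_mem {S : Set T} (hS : IsMulSet S) :
    ∀ {n : ℕ} {s : Fin n → T}, (∀ i, s i ∈ S) → (List.ofFn s).prod ∈ S
  | 0, _, _ => by simpa using hS.1
  | n + 1, s, hs => by
    rw [List.ofFn_succ, List.prod_cons]
    exact hS.2.2 _ (hs 0) _ (prod_ofFn_mem hS fun i => hs i.succ)

namespace IsPrimeRich

theorem exists_primes_prod_eq_zero (h : IsPrimeRich T) :
    ∃ (n : ℕ) (P : Fin n → Set T), (∀ i, IsPrimeIdealSet (P i)) ∧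
      ∀ x : Fin n → T, (∀ i, x i ∈ P i) → (List.ofFn x).prod = 0 := by
  obtain ⟨n, P, hP, hprod⟩ := h {0} (by refine ⟨rfl, ?_, ?_, ?_⟩ <;> simp)
  exact ⟨n, P, fun i => (hP i).1, hprod⟩

theorem exists_finite_primes_forall_exists_subset (h : IsPrimeRich T) :
    ∃ F : Set (Set T), F.Finite ∧ (∀ P ∈ F, IsPrimeIdealSet P) ∧
      ∀ p, IsPrimeIdealSet p → ∃ P ∈ F, P ⊆ p := by
  obtain ⟨n, P, hP, hprod⟩ := h.exists_primes_prod_eq_zero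
  refine ⟨Set.range P, Set.finite_range P, Set.forall_mem_range.2 hP, fun p hp => ?_⟩
  obtain ⟨i, hi⟩ := hp.exists_subset_of_forall_prod_mem (fun i => (hP i).1)
    fun x hx => hprod x hx ▸ hp.1.zero_mem
  exact ⟨P i, Set.mem_range_self i, hi⟩

theorem minPrimes_finite (h : IsPrimeRich T) : (minPrimes T).Finite := by
  obtain ⟨F, hFfin, hF, hcov⟩ := h.exists_finite_primes_forall_exists_subset
  rw [minPrimes_eq_of_forall_exists_subset hF hcov]
  exact hFfin.subset (Set.sep_subset _ _)

theorem exists_minimal_subset (h : IsPrimeRich T) {p : Set T} (hp : IsPrimeIdealSet p) :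
    ∃ p₀, IsMinimalPrimeIdealSet p₀ ∧ p₀ ⊆ p := by
  obtain ⟨F, hFfin, hF, hcov⟩ := h.exists_finite_primes_forall_exists_subset
  obtain ⟨p₀, hmin, hle⟩ := exists_minimal_le_of_forall_exists_le hFfin hF hcov hp
  exact ⟨p₀, isMinimalPrimeIdealSet_iff_minimal.2 hmin, hle⟩

theorem exists_minimal_inter_eq_empty (h : IsPrimeRich T) {S : Set T} (hS : IsMulSet S) :
    ∃ p, IsMinimalPrimeIdealSet p ∧ p ∩ S = ∅ := by
  obtain ⟨n, P, hP, hprod⟩ := h.exists_primes_prod_eq_zero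
  obtain ⟨i, hi⟩ : ∃ i, P i ∩ S = ∅ := by
    by_contra! hmeet
    choose s hs using hmeet
    exact hS.2.1 (hprod s (fun i => (hs i).1) ▸ hS.prod_ofFn_mem fun i => (hs i).2)
  obtain ⟨p, hp, hpi⟩ := h.exists_minimal_subset (hP i)
  exact ⟨p, hp, Set.subset_eq_empty (Set.inter_subset_inter_left S hpi) hi⟩

end IsPrimeRich

end PrimeRich

section Localization

variable {R Q : Type*} [Ring R] [Ring Q] {S : Set R} {f : R →+* Q}

theorem map_mem_locSet (hS : IsMulSet S) {I : Set R} {a : R} (ha : a ∈ I) :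
    f a ∈ locSet f S I :=
  ⟨1, hS.1, a, ha, by simp⟩

theorem locSet_mono {I J : Set R} (h : I ⊆ J) : locSet f S I ⊆ locSet f S J :=
  fun _ ⟨s, hs, a, ha, e⟩ => ⟨s, hs, a, h ha, e⟩

theorem inter_eq_empty_of_locSet_subset (hS : IsMulSet S) (hf : IsLeftLocalization S f)
    {I : Set R} {P : Set Q} (hP : IsPrimeIdealSet P) (hIP : locSet f S I ⊆ P) : I ∩ S = ∅ := by
  refine Set.eq_empty_of_forall_notMem fun s ⟨hsI, hsS⟩ => hP.one_notMem ?_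
  obtain ⟨u, hu⟩ := hf.isUnit s hsS
  simpa [← hu] using hP.1.mul_mem_left ↑u⁻¹ (hIP (map_mem_locSet hS hsI))

theorem exists_mul_eq_mul_of_isIdealSet_locSet (hS : IsMulSet S) (hf : IsLeftLocalization S f)
    {I : Set R} (hI : IsIdealSet (locSet f S I)) {a s : R} (ha : a ∈ I) (hs : s ∈ S) :
    ∃ t ∈ S, ∃ c ∈ I, f t * f a = f c * f s := by
  obtain ⟨u, hu⟩ := hf.isUnit s hs
  obtain ⟨t, ht, c, hc, e⟩ := hI.mul_mem_right (map_mem_locSet hS ha) ↑u⁻¹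
  refine ⟨t, ht, c, hc, ?_⟩
  rw [← e, ← hu, mul_assoc, mul_assoc, Units.inv_mul, mul_one]

theorem exists_mul_prod_ofFn_eq (hS : IsMulSet S) (hf : IsLeftLocalization S f) :
    ∀ {n : ℕ} {I : Fin n → Set R}, (∀ i, IsIdealSet (locSet f S (I i))) →
      ∀ u : Fin n → Q, (∀ i, u i ∈ locSet f S (I i)) →
        ∃ s ∈ S, ∃ c : Fin n → R, (∀ i, c i ∈ I i) ∧
          f s * (List.ofFn u).prod = f (List.ofFn c).prod
  | 0, _, _, _, _ => ⟨1, hS.1, Fin.elim0, fun i => i.elim0, by simp⟩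
  | n + 1, I, hI, u, hu => by
    obtain ⟨s, hs, c, hc, e⟩ := exists_mul_prod_ofFn_eq hS hf (fun i => hI i.succ)
      (fun i => u i.succ) fun i => hu i.succ
    obtain ⟨s₀, hs₀, a₀, ha₀, e₀⟩ := hu 0
    obtain ⟨t, ht, c₀, hc₀, et⟩ := exists_mul_eq_mul_of_isIdealSet_locSet hS hf (hI 0) ha₀ hs
    refine ⟨t * s₀, hS.2.2 _ ht _ hs₀, Fin.cons c₀ c, Fin.cases hc₀ hc, ?_⟩
    calc f (t * s₀) * (List.ofFn u).prod
        = f t * (f s₀ * u 0) * (List.ofFn fun i => u i.succ).prod := by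
          simp [List.ofFn_succ, mul_assoc]
      _ = f c₀ * (f s * (List.ofFn fun i => u i.succ).prod) := by rw [e₀, et, mul_assoc]
      _ = f (List.ofFn (Fin.cons c₀ c : Fin (n + 1) → R)).prod := by
          rw [e]; simp [List.ofFn_succ]

theorem exists_minimal_locSet_subset (hrich : IsPrimeRich R) (hS : IsMulSet S)
    (hf : IsLeftLocalization S f)
    (hresp : ∀ p : Set R, IsPrimeIdealSet p → IsIdealSet (locSet f S p))
    {P : Set Q} (hP : IsPrimeIdealSet P) :
    ∃ p, IsMinimalPrimeIdealSet p ∧ p ∩ S = ∅ ∧ locSet f S p ⊆ P := by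
  obtain ⟨n, Pr, hPr, hprod⟩ := hrich.exists_primes_prod_eq_zero
  have hloc : ∀ i, IsIdealSet (locSet f S (Pr i)) := fun i => hresp _ (hPr i)
  have hprodP : ∀ u : Fin n → Q, (∀ i, u i ∈ locSet f S (Pr i)) → (List.ofFn u).prod ∈ P := by
    intro u hu
    obtain ⟨s, hs, c, hc, e⟩ := exists_mul_prod_ofFn_eq hS hf hloc u hu
    rw [hprod c hc, map_zero, (hf.isUnit s hs).mul_right_eq_zero] at e
    exact e ▸ hP.1.zero_mem
  obtain ⟨i, hi⟩ := hP.exists_subset_of_forall_prod_mem hloc hprodP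
  obtain ⟨p, hp, hpi⟩ := hrich.exists_minimal_subset (hPr i)
  refine ⟨p, hp, ?_, (locSet_mono hpi).trans hi⟩
  exact Set.subset_eq_empty (Set.inter_subset_inter_left S hpi)
    (inter_eq_empty_of_locSet_subset hS hf hP hi)

theorem exists_mul_mem_of_map_mem_locSet (hS : IsMulSet S) (hf : IsLeftLocalization S f)
    {I : Set R} (hI : IsIdealSet I) {x : R} (hx : f x ∈ locSet f S I) : ∃ t ∈ S, t * x ∈ I := by
  obtain ⟨s, hs, a, ha, e⟩ := hx
  obtain ⟨t, ht, e'⟩ := (hf.ker (s * x - a)).1 (by rw [map_sub, map_mul, e, sub_self])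
  rw [mul_sub, sub_eq_zero] at e'
  refine ⟨t * s, hS.2.2 _ ht _ hs, ?_⟩
  rw [mul_assoc, e']
  exact hI.mul_mem_left t ha

theorem exists_common_left_multiple (hS : IsMulSet S) (hore : LeftOre S) {ι : Type*}
    (F : Finset ι) {s : ι → R} (hs : ∀ i ∈ F, s i ∈ S) :
    ∃ t ∈ S, ∀ i ∈ F, ∃ r, t = r * s i := by
  classical
  induction F using Finset.induction_on with
  | empty => exact ⟨1, hS.1, by simp⟩
  | insert j F _ ih =>
    obtain ⟨t, ht, hmul⟩ := ih fun i hi => hs i (Finset.mem_insert_of_mem hi)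
    obtain ⟨t', ht', r', e⟩ := hore t (s j) (hs j (Finset.mem_insert_self j F))
    refine ⟨t' * t, hS.2.2 _ ht' _ ht, fun i hi => ?_⟩
    rcases Finset.mem_insert.1 hi with rfl | hi
    · exact ⟨r', e⟩
    · obtain ⟨r, hr⟩ := hmul i hi
      exact ⟨t' * r, by rw [hr, mul_assoc]⟩

theorem preimage_locSet_eq_of_isFGRightIdeal (hS : IsMulSet S) (hore : LeftOre S)
    (hf : IsLeftLocalization S f) {p : Set R} (hp : IsPrimeIdealSet p) (hpS : p ∩ S = ∅)
    (hloc : IsIdealSet (locSet f S p)) (hfg : IsFGRightIdeal (f ⁻¹' locSet f S p)) :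
    f ⁻¹' locSet f S p = p := by
  obtain ⟨m, g, hg, hgen⟩ := hfg
  choose s hs hsg using fun i => exists_mul_mem_of_map_mem_locSet hS hf hp.1 (hg i)
  obtain ⟨t, ht, hmul⟩ := exists_common_left_multiple hS hore Finset.univ fun i _ => hs i
  have htp : ∀ x ∈ f ⁻¹' locSet f S p, t * x ∈ p := by
    intro x hx
    obtain ⟨c, rfl⟩ := hgen x hx
    rw [Finset.mul_sum]
    refine Finset.sum_induction _ (· ∈ p) (fun _ _ => hp.1.add_mem) hp.1.zero_mem fun i _ => ?_
    obtain ⟨r, rfl⟩ := hmul i (Finset.mem_univ i)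
    simpa only [mul_assoc] using hp.1.mul_mem_right (hp.1.mul_mem_left r (hsg i)) (c i)
  have htp' : t ∉ p := fun h => Set.eq_empty_iff_forall_notMem.1 hpS t ⟨h, ht⟩
  refine subset_antisymm (fun x hx => ?_) fun a ha => map_mem_locSet hS ha
  refine (hp.mem_or_mem_of_forall_mul_mul_mem fun q => ?_).resolve_left htp'
  rw [mul_assoc]
  exact htp _ (by simpa only [Set.mem_preimage, map_mul] using hloc.mul_mem_left (f q) hx)

end Localization

theorem statement4_general {R Q : Type*} [Ring R] [Ring Q]
    (hrich : IsPrimeRich R)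
    {S : Set R} (hSl : IsLeftDenominatorSet S)
    (f : R →+* Q) (hf : IsLeftLocalization S f)
    (hresp : ∀ p : Set R, IsPrimeIdealSet p → IsIdealSet (locSet f S p))
    (hprime : ∀ p ∈ {p : Set R | IsMinimalPrimeIdealSet p ∧ p ∩ S = ∅},
      IsPrimeIdealSet (locSet f S p)) :
    ({p : Set R | IsMinimalPrimeIdealSet p ∧ p ∩ S = ∅}.Nonempty ∧
      (minPrimes R).Finite ∧
      {p : Set R | IsMinimalPrimeIdealSet p ∧ p ∩ S = ∅}.ncard ≤ (minPrimes R).ncard ∧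
      minPrimes Q =
        {P ∈ locSet f S '' {p : Set R | IsMinimalPrimeIdealSet p ∧ p ∩ S = ∅} |
          ∀ P' ∈ locSet f S '' {p : Set R | IsMinimalPrimeIdealSet p ∧ p ∩ S = ∅},
            P' ⊆ P → P' = P} ∧
      (minPrimes Q).ncard ≤ {p : Set R | IsMinimalPrimeIdealSet p ∧ p ∩ S = ∅}.ncard) ∧
    ((minPrimes Q = locSet f S '' {p : Set R | IsMinimalPrimeIdealSet p ∧ p ∩ S = ∅}) ↔
      ∀ P ∈ locSet f S '' {p : Set R | IsMinimalPrimeIdealSet p ∧ p ∩ S = ∅},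
        ∀ P' ∈ locSet f S '' {p : Set R | IsMinimalPrimeIdealSet p ∧ p ∩ S = ∅},
          P ⊆ P' → P = P') ∧
    ((∀ p ∈ {p : Set R | IsMinimalPrimeIdealSet p ∧ p ∩ S = ∅},
        IsFGRightIdeal (f ⁻¹' locSet f S p)) →
      minPrimes Q = locSet f S '' {p : Set R | IsMinimalPrimeIdealSet p ∧ p ∩ S = ∅}) := by
  set M := {p : Set R | IsMinimalPrimeIdealSet p ∧ p ∩ S = ∅}
  have hS : IsMulSet S := hSl.1
  have hRfin := hrich.minPrimes_finite
  have hQ : minPrimes Q = {P ∈ locSet f S '' M | ∀ P' ∈ locSet f S '' M, P' ⊆ P → P' = P} := by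
    refine minPrimes_eq_of_forall_exists_subset (by rintro _ ⟨p, hp, rfl⟩; exact hprime p hp)
      fun P hP => ?_
    obtain ⟨p, hp, hpS, hpP⟩ := exists_minimal_locSet_subset hrich hS hf hresp hP
    exact ⟨_, ⟨p, ⟨hp, hpS⟩, rfl⟩, hpP⟩
  have hincomp := hQ ▸ sep_minimal_eq_self_iff (L := locSet f S '' M)
  refine ⟨⟨hrich.exists_minimal_inter_eq_empty hS, hRfin,
    Set.ncard_le_ncard (fun p hp => hp.1) hRfin, hQ, ?_⟩, hincomp, fun hfg => ?_⟩
  · have hMfin : M.Finite := hRfin.subset fun p hp => hp.1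
    calc (minPrimes Q).ncard ≤ (locSet f S '' M).ncard :=
          Set.ncard_le_ncard (hQ ▸ Set.sep_subset _ _) (hMfin.image _)
      _ ≤ M.ncard := Set.ncard_image_le hMfin
  · have hcontr : ∀ p ∈ M, f ⁻¹' locSet f S p = p := fun p hp =>
      preimage_locSet_eq_of_isFGRightIdeal hS hSl.2.1 hf hp.1.1 hp.2 (hresp p hp.1.1) (hfg p hp)
    refine hincomp.2 ?_
    rintro _ ⟨p, hp, rfl⟩ _ ⟨p', hp', rfl⟩ hsub
    have hpp' : p ⊆ p' := hcontr p hp ▸ hcontr p' hp' ▸ Set.preimage_mono hsub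
    rw [hp'.1.2 p hp.1.1 hpp']

/-- Let `R` be prime rich, `S ∈ Den(R, 𝔞)` a (left and right)
denominator set respecting the ideal structure of primes, with `S⁻¹𝔭` prime
for all `𝔭 ∈ min(R,S)`.  Then: (1) `1 ≤ |min(R,S)| ≤ |min(R)| < ∞` and
`min(S⁻¹R)` is the set of minimal elements of `{S⁻¹𝔭 | 𝔭 ∈ min(R,S)}`,
so `|min(S⁻¹R)| ≤ |min(R,S)| < ∞`; (2) `min(S⁻¹R) = {S⁻¹𝔭 | 𝔭 ∈ min(R,S)}`
iff these ideals are pairwise incomparable; (3) if moreover each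
`σ_S⁻¹(S⁻¹𝔭)` is finitely generated as a right `R`-module, then
`min(S⁻¹R) = {S⁻¹𝔭 | 𝔭 ∈ min(R,S)}`. -/
theorem statement4 {R Q : Type*} [Ring R] [Ring Q]
    (hrich : IsPrimeRich R)
    {S : Set R} (hSl : IsLeftDenominatorSet S) (hSr : IsRightDenominatorSet S)
    {A : Set R} (hass : lAss S = A)
    (f : R →+* Q) (hf : IsLeftLocalization S f)
    (hresp : ∀ p : Set R, IsPrimeIdealSet p → IsIdealSet (locSet f S p))
    (hprime : ∀ p ∈ {p : Set R | IsMinimalPrimeIdealSet p ∧ p ∩ S = ∅},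
      IsPrimeIdealSet (locSet f S p)) :
    ({p : Set R | IsMinimalPrimeIdealSet p ∧ p ∩ S = ∅}.Nonempty ∧
      (minPrimes R).Finite ∧
      {p : Set R | IsMinimalPrimeIdealSet p ∧ p ∩ S = ∅}.ncard ≤ (minPrimes R).ncard ∧
      minPrimes Q =
        {P ∈ locSet f S '' {p : Set R | IsMinimalPrimeIdealSet p ∧ p ∩ S = ∅} |
          ∀ P' ∈ locSet f S '' {p : Set R | IsMinimalPrimeIdealSet p ∧ p ∩ S = ∅},
            P' ⊆ P → P' = P} ∧
      (minPrimes Q).ncard ≤ {p : Set R | IsMinimalPrimeIdealSet p ∧ p ∩ S = ∅}.ncard) ∧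
    ((minPrimes Q = locSet f S '' {p : Set R | IsMinimalPrimeIdealSet p ∧ p ∩ S = ∅}) ↔
      ∀ P ∈ locSet f S '' {p : Set R | IsMinimalPrimeIdealSet p ∧ p ∩ S = ∅},
        ∀ P' ∈ locSet f S '' {p : Set R | IsMinimalPrimeIdealSet p ∧ p ∩ S = ∅},
          P ⊆ P' → P = P') ∧
    ((∀ p ∈ {p : Set R | IsMinimalPrimeIdealSet p ∧ p ∩ S = ∅},
        IsFGRightIdeal (f ⁻¹' locSet f S p)) →
      minPrimes Q = locSet f S '' {p : Set R | IsMinimalPrimeIdealSet p ∧ p ∩ S = ∅}) :=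
  statement4_general hrich hSl f hf hresp hprime

end BavulaMinPrimes
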